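/- Let a one-column two-color Clickomania puzzle have an odd number n of groups g_1, …, g_n, and let the median group be g_m with m = (n+1)/2. If the median group has size at least two, then the puzzle is solvable. -/

import Mathlib

/-- A move: delete a maximal run of at least two consecutive equal letters.
`w = x ++ c^m ++ y` with `m ≥ 2`, `x` not ending in `c`, `y` not starting in `c`;
the result is `x ++ y`. -/
def ClickMove {α : Type*} (w w' : List α) : Prop :=
  ∃ (x y : List α) (c : α) (m : ℕ),
    2 ≤ m ∧
    x.getLast? ≠ some c ∧
    y.head? ≠ some c ∧
    w = x ++ List.replicate m c ++ y ∧
    w' = x ++ y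

/-- A word is solvable if some finite sequence of moves reduces it to the empty word. -/
def Solvable {α : Type*} (w : List α) : Prop :=
  Relation.ReflTransGen ClickMove w []

/-- The word obtained from a list of groups (letter, size): the concatenation
of the monochromatic runs. -/
def wordOf {α : Type*} (gs : List (α × ℕ)) : List α :=
  (gs.map fun g => List.replicate g.2 g.1).flatten

/-- `gs` is a valid list of groups: every group is nonempty and
consecutive groups have different letters (so the groups are exactly the
maximal runs of `wordOf gs`). -/
def IsGroups {α : Type*} (gs : List (α × ℕ)) : Prop :=
  (∀ g ∈ gs, 1 ≤ g.2) ∧ List.Chain' (fun a b => a.1 ≠ b.1) gs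

lemma wordOf_append {α : Type*} (a b : List (α × ℕ)) :
    wordOf (a ++ b) = wordOf a ++ wordOf b := by
  simp [wordOf]

lemma wordOf_cons {α : Type*} (g : α × ℕ) (b : List (α × ℕ)) :
    wordOf (g :: b) = List.replicate g.2 g.1 ++ wordOf b := by
  simp [wordOf]

lemma getD_append_mid {α : Type*} (a b : List α) (g d : α) :
    (a ++ g :: b).getD a.length d = g := by
  rw [List.getD_eq_getElem?_getD, List.getElem?_append_right le_rfl]
  simp

set_option maxRecDepth 4000 in
lemma key : ∀ n (gs : List (Bool × ℕ)), gs.length = n → IsGroups gs → Odd n →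
    2 ≤ (gs.getD (n / 2) (false, 0)).2 → Solvable (wordOf gs) := by
  intro n
  induction n using Nat.strong_induction_on with
  | _ n ih =>
    intro gs hlen hg hodd hmed
    obtain ⟨k, hk⟩ := hodd
    match k, hk with
    | 0, hk =>
      -- single group
      obtain ⟨g, rfl⟩ := List.length_eq_one_iff.mp (by omega : gs.length = 1)
      obtain ⟨c, m⟩ := g
      have hm : 2 ≤ m := by simpa [hk, hlen] using hmed
      have step : ClickMove (wordOf [(c, m)]) [] := by
        refine ⟨[], [], c, m, hm, by simp, by simp, by simp [wordOf], by simp⟩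
      exact Relation.ReflTransGen.single step
    | k + 1, hk =>
      have hn : n = 2 * k + 3 := by omega
      have hklen : k ≤ gs.length := by omega
      rcases hd : gs.drop k with _ | ⟨⟨ca, ka⟩, _ | ⟨⟨cm, km⟩, _ | ⟨⟨cb, kb⟩, b'⟩⟩⟩
      · have := congrArg List.length hd; simp [hlen] at this; omega
      · have := congrArg List.length hd; simp [hlen] at this; omega
      · have := congrArg List.length hd; simp [hlen] at this; omega
      set a' := gs.take k with ha'
      have hgs : gs = a' ++ (ca, ka) :: (cm, km) :: (cb, kb) :: b' := by
        rw [ha', ← hd, List.take_append_drop]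
      have hla : a'.length = k := by
        rw [ha', List.length_take]; omega
      have hlb : b'.length = k := by
        have := congrArg List.length hgs
        simp [hla] at this; omega
      -- median is (cm, km)
      have hmed' : 2 ≤ km := by
        have h2 : n / 2 = k + 1 := by omega
        have : gs.getD (k + 1) (false, 0) = (cm, km) := by
          have : gs = (a' ++ [(ca, ka)]) ++ (cm, km) :: (cb, kb) :: b' := by
            simp [hgs]
          rw [this]
          have hl : (a' ++ [(ca, ka)]).length = k + 1 := by simp [hla]
          rw [← hl]; exact getD_append_mid _ _ _ _
        rw [h2, this] at hmed
        exact hmed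
      obtain ⟨hsz, hch⟩ := hg
      have hka : 1 ≤ ka := hsz (ca, ka) (by rw [hgs]; simp)
      have hkb : 1 ≤ kb := hsz (cb, kb) (by rw [hgs]; simp)
      rw [hgs] at hch
      unfold List.Chain' at hch
      rw [List.isChain_append] at hch
      obtain ⟨hch1, hch2, hch3⟩ := hch
      have hac : ca ≠ cm := by
        have := (List.isChain_cons_cons.mp hch2).1; simpa using this
      have hcb : cm ≠ cb := by
        have := (List.isChain_cons_cons.mp (List.isChain_cons_cons.mp hch2).2).1; simpa using this
      have hchb : List.Chain' (fun a b => a.1 ≠ b.1) ((cb, kb) :: b') :=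
        (List.isChain_cons_cons.mp (List.isChain_cons_cons.mp hch2).2).2
      have hab : ca = cb := by
        have := Bool.eq_not_of_ne hac
        have := Bool.eq_not_of_ne (Ne.symm hcb)
        subst this; exact ‹ca = !cm›
      subst hab
      -- the new list of groups
      set gs' : List (Bool × ℕ) := a' ++ (ca, ka + kb) :: b' with hgs'
      have hstep : ClickMove (wordOf gs) (wordOf gs') := by
        refine ⟨wordOf a' ++ List.replicate ka ca,
          List.replicate kb ca ++ wordOf b', cm, km, hmed', ?_, ?_, ?_, ?_⟩
        · rw [List.getLast?_append_of_ne_nil _ (by simp; omega),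
            List.getLast?_replicate, if_neg (by omega)]
          simp [hac]
        · rw [List.head?_append_of_ne_nil _ (by simp; omega),
            List.head?_replicate, if_neg (by omega)]
          simp [Ne.symm hcb]
        · rw [hgs]; simp [wordOf_append, wordOf_cons]
        · rw [hgs', wordOf_append, wordOf_cons]
          rw [List.replicate_add, List.append_assoc]
          simp
      have hsol' : Solvable (wordOf gs') := by
        refine ih (2 * k + 1) (by omega) gs' ?_ ⟨?_, ?_⟩ ⟨k, by ring⟩ ?_
        · simp [hgs', hla, hlb]; omega
        · intro g hgmem
          rw [hgs'] at hgmem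
          rcases List.mem_append.mp hgmem with h | h
          · exact hsz g (by rw [hgs]; simp [h])
          · rcases List.mem_cons.mp h with h | h
            · subst h; simpa using by omega
            · exact hsz g (by rw [hgs]; simp [h])
        · rw [hgs']; unfold List.Chain'; rw [List.isChain_append]
          refine ⟨hch1, ?_, ?_⟩
          · rw [List.isChain_cons]
            refine ⟨?_, (List.isChain_cons.mp hchb).2⟩
            intro y hy
            have := (List.isChain_cons.mp hchb).1 y hy
            simpa using this
          · intro x hx y hy
            have := hch3 x hx (ca, ka) (by simp)
            simp at hy
            subst hy
            simpa using this
        · have h2 : (2 * k + 1) / 2 = k := by omega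
          rw [h2, ← hla, hgs', getD_append_mid]
          simp; omega
      exact Relation.ReflTransGen.head hstep hsol'

/-- In a one-column two-color Clickomania puzzle with an odd number `n` of
groups, if the median group `g_{(n+1)/2}` (0-indexed: index `n / 2`) has size at
least two, then the puzzle is solvable. -/
theorem solvable_of_median_nonsingleton (gs : List (Bool × ℕ))
    (hg : IsGroups gs) (hodd : Odd gs.length)
    (hmed : 2 ≤ (gs.getD (gs.length / 2) (false, 0)).2) :
    Solvable (wordOf gs) := by
  exact key gs.length gs rfl hg hodd hmed
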